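/- Under the same P₁-action on ℝ⁵, every nonzero vector with v₄ = v₅ = 0 and v₃ ≠ 0 can be mapped to e₃ = (0,0,1,0,0), and every nonzero vector with v₃ = v₄ = v₅ = 0 can be mapped to e₁ = (1,0,0,0,0). -/

import Mathlib

/-- The unipotent action of exp(𝔭₊) on 𝔪 ≅ ℝ⁵ (coordinates v₁,…,v₅ = indices 0,…,4). -/
noncomputable def rhoAct (s1 s2 s3 : ℝ) (v : Fin 5 → ℝ) : Fin 5 → ℝ :=
  ![v 0 - s2 * v 2 + (s3 - s1 * s2) * v 3 - (1/2) * s2^2 * v 4,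
    v 1 + s1 * v 2 + (1/2) * s1^2 * v 3 + (s3 + s1 * s2) * v 4,
    v 2 + s1 * v 3 + s2 * v 4,
    v 3,
    v 4]

/-- The graded GL₂-action on 𝔪 for A = [[a,b],[c,d]]. -/
noncomputable def glAct (a b c d : ℝ) (v : Fin 5 → ℝ) : Fin 5 → ℝ :=
  ![a * v 0 + b * v 1,
    c * v 0 + d * v 1,
    (a * d - b * c) * v 2,
    (a * d - b * c) * (a * v 3 + b * v 4),
    (a * d - b * c) * (c * v 3 + d * v 4)]

/-- The set of generators of the P₁-action: unipotent elements and GL₂ elements. -/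
noncomputable def P1gens : Set ((Fin 5 → ℝ) ≃ₗ[ℝ] (Fin 5 → ℝ)) :=
  {f | (∃ s1 s2 s3 : ℝ, ∀ v, f v = rhoAct s1 s2 s3 v) ∨
       (∃ a b c d : ℝ, a * d - b * c ≠ 0 ∧ ∀ v, f v = glAct a b c d v)}

/-!
Every `rhoAct s`, and every `glAct A` with `det A ≠ 0`, is an injective linear endomorphism of
`ℝ⁵`, hence a linear automorphism lying in `Subgroup.closure P1gens`.
If `v₄ = v₅ = 0` and `v₃ ≠ 0`, the unipotent element with `s₁ = -v₂/v₃`, `s₂ = v₁/v₃` clears the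
first two coordinates, and `diag(1, 1/v₃)` rescales `v₃` to `1`. If only `(v₁, v₂) ≠ 0` survives,
the matrix with rows `(v₁, v₂)/(v₁² + v₂²)` and `(-v₂, v₁)` has determinant `1` and sends
`(v₁, v₂)` to `(1, 0)`.
-/

lemma eq_zero_of_mul_add_mul_eq_zero {R : Type*} [CommRing R] [NoZeroDivisors R] {a b c d x y : R}
    (hdet : a * d - b * c ≠ 0) (h₁ : a * x + b * y = 0) (h₂ : c * x + d * y = 0) :
    x = 0 ∧ y = 0 := by
  constructor
  · have : (a * d - b * c) * x = 0 := by linear_combination d * h₁ - b * h₂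
    exact (mul_eq_zero.mp this).resolve_left hdet
  · have : (a * d - b * c) * y = 0 := by linear_combination a * h₂ - c * h₁
    exact (mul_eq_zero.mp this).resolve_left hdet

noncomputable def rhoLinear (s1 s2 s3 : ℝ) : (Fin 5 → ℝ) →ₗ[ℝ] (Fin 5 → ℝ) where
  toFun := rhoAct s1 s2 s3
  map_add' x y := by funext i; fin_cases i <;> simp [rhoAct] <;> ring
  map_smul' t x := by funext i; fin_cases i <;> simp [rhoAct] <;> ring

noncomputable def glLinear (a b c d : ℝ) : (Fin 5 → ℝ) →ₗ[ℝ] (Fin 5 → ℝ) where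
  toFun := glAct a b c d
  map_add' x y := by funext i; fin_cases i <;> simp [glAct] <;> ring
  map_smul' t x := by funext i; fin_cases i <;> simp [glAct] <;> ring

lemma rhoLinear_injective (s1 s2 s3 : ℝ) : Function.Injective (rhoLinear s1 s2 s3) := by
  refine (injective_iff_map_eq_zero _).mpr fun v hv => ?_
  have h := fun i => congrFun hv i
  have h4 : v 4 = 0 := by simpa [rhoLinear, rhoAct] using h 4
  have h3 : v 3 = 0 := by simpa [rhoLinear, rhoAct] using h 3
  have h2 : v 2 = 0 := by simpa [rhoLinear, rhoAct, h3, h4] using h 2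
  have h1 : v 1 = 0 := by simpa [rhoLinear, rhoAct, h2, h3, h4] using h 1
  have h0 : v 0 = 0 := by simpa [rhoLinear, rhoAct, h2, h3, h4] using h 0
  funext i
  fin_cases i <;> assumption

lemma glLinear_injective {a b c d : ℝ} (hdet : a * d - b * c ≠ 0) :
    Function.Injective (glLinear a b c d) := by
  refine (injective_iff_map_eq_zero _).mpr fun v hv => ?_
  have h := fun i => congrFun hv i
  simp only [glLinear, LinearMap.coe_mk, AddHom.coe_mk, glAct, Pi.zero_apply] at h
  obtain ⟨h0, h1⟩ := eq_zero_of_mul_add_mul_eq_zero hdet (by simpa using h 0) (by simpa using h 1)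
  obtain ⟨h3, h4⟩ := eq_zero_of_mul_add_mul_eq_zero hdet
    (by simpa [hdet] using h 3) (by simpa [hdet] using h 4)
  have h2 : v 2 = 0 := by simpa [hdet] using h 2
  funext i
  fin_cases i <;> assumption

lemma exists_mem_closure_P1gens_coe_eq_rhoAct (s1 s2 s3 : ℝ) :
    ∃ f ∈ Subgroup.closure P1gens, ⇑f = rhoAct s1 s2 s3 := by
  refine ⟨LinearEquiv.ofInjectiveEndo _ (rhoLinear_injective s1 s2 s3),
    Subgroup.subset_closure ?_, rfl⟩
  exact Or.inl ⟨s1, s2, s3, fun _ => rfl⟩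

lemma exists_mem_closure_P1gens_coe_eq_glAct {a b c d : ℝ} (hdet : a * d - b * c ≠ 0) :
    ∃ f ∈ Subgroup.closure P1gens, ⇑f = glAct a b c d := by
  refine ⟨LinearEquiv.ofInjectiveEndo _ (glLinear_injective hdet),
    Subgroup.subset_closure ?_, rfl⟩
  exact Or.inr ⟨a, b, c, d, hdet, fun _ => rfl⟩

lemma glAct_rhoAct_eq_e₃ {v : Fin 5 → ℝ} (h3 : v 3 = 0) (h4 : v 4 = 0) (h2 : v 2 ≠ 0) :
    glAct 1 0 0 (v 2)⁻¹ (rhoAct (-(v 1 / v 2)) (v 0 / v 2) 0 v) = ![0, 0, 1, 0, 0] := by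
  funext i
  fin_cases i <;> simp [rhoAct, glAct, h2, h3, h4]

lemma glAct_eq_e₁ {v : Fin 5 → ℝ} (h2 : v 2 = 0) (h3 : v 3 = 0) (h4 : v 4 = 0)
    (hn : v 0 ^ 2 + v 1 ^ 2 ≠ 0) :
    glAct (v 0 / (v 0 ^ 2 + v 1 ^ 2)) (v 1 / (v 0 ^ 2 + v 1 ^ 2)) (-v 1) (v 0) v
      = ![1, 0, 0, 0, 0] := by
  funext i
  fin_cases i <;> simp [glAct, h2, h3, h4]
  · field_simp
  · ring

/-- Under the P₁-action: every nonzero vector with v₄ = v₅ = 0 and v₃ ≠ 0 can be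
mapped to e₃ = (0,0,1,0,0), and every nonzero vector with v₃ = v₄ = v₅ = 0 can be
mapped to e₁ = (1,0,0,0,0). -/
theorem lower_orbits_normal_forms :
    (∀ v : Fin 5 → ℝ, v ≠ 0 → v 3 = 0 → v 4 = 0 → v 2 ≠ 0 →
      ∃ f ∈ Subgroup.closure P1gens, f v = ![0, 0, 1, 0, 0]) ∧
    (∀ v : Fin 5 → ℝ, v ≠ 0 → v 2 = 0 → v 3 = 0 → v 4 = 0 →
      ∃ f ∈ Subgroup.closure P1gens, f v = ![1, 0, 0, 0, 0]) := by
  constructor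
  · intro v _ h3 h4 h2
    obtain ⟨u, hu, hu_eq⟩ := exists_mem_closure_P1gens_coe_eq_rhoAct (-(v 1 / v 2)) (v 0 / v 2) 0
    obtain ⟨g, hg, hg_eq⟩ :=
      exists_mem_closure_P1gens_coe_eq_glAct (a := 1) (b := 0) (c := 0) (d := (v 2)⁻¹) (by simpa)
    refine ⟨g * u, mul_mem hg hu, ?_⟩
    rw [LinearEquiv.mul_apply, hu_eq, hg_eq, glAct_rhoAct_eq_e₃ h3 h4 h2]
  · intro v hv h2 h3 h4
    have hn : v 0 ^ 2 + v 1 ^ 2 ≠ 0 := fun h => hv <| by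
      obtain ⟨h0, h1⟩ := mul_self_add_mul_self_eq_zero.mp (by simpa only [sq] using h)
      funext i
      fin_cases i <;> assumption
    have hdet : v 0 / (v 0 ^ 2 + v 1 ^ 2) * v 0 - v 1 / (v 0 ^ 2 + v 1 ^ 2) * -v 1 = 1 := by
      field_simp
      ring
    obtain ⟨g, hg, hg_eq⟩ := exists_mem_closure_P1gens_coe_eq_glAct (hdet ▸ one_ne_zero)
    exact ⟨g, hg, by rw [hg_eq, glAct_eq_e₁ h2 h3 h4 hn]⟩
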